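/- arXiv:2108.01956 — 6 statements merged into one kernel-verified Lean document; each statement's English description precedes it below -/
import Mathlib

section
/- If T is a recurrent bounded linear operator on a Hilbert space H, then the range of T is dense in H. -/
open Filter Topology

def Recurrent {X : Type*} [TopologicalSpace X] (T : X → X) : Prop :=
  ∀ U : Set X, IsOpen U → U.Nonempty → ∃ n : ℕ, 0 < n ∧ ((T^[n]) '' U ∩ U).Nonempty

theorem stmt1 {H : Type*} [NormedAddCommGroup H] [InnerProductSpace ℂ H]
    [CompleteSpace H] (T : H →L[ℂ] H) (hrec : Recurrent (⇑T)) :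
    DenseRange (⇑T) := by
  by_contra hden
  rw [DenseRange, Dense] at hden
  push_neg at hden
  obtain ⟨x, hx⟩ := hden
  set M := closure (Set.range ⇑T) with hM
  have hMc : IsClosed M := isClosed_closure
  have hMne : M.Nonempty := ⟨T 0, subset_closure ⟨0, rfl⟩⟩
  have hd : 0 < Metric.infDist x M :=
    (hMc.notMem_iff_infDist_pos hMne).mp hx
  obtain ⟨n, hn, y, ⟨z, hzU, hzy⟩, hyU⟩ :=
    hrec (Metric.ball x (Metric.infDist x M / 2)) Metric.isOpen_ball
      ⟨x, Metric.mem_ball_self (by linarith)⟩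
  have hyM : y ∈ M := by
    subst hzy
    obtain ⟨m, rfl⟩ := Nat.exists_eq_succ_of_ne_zero hn.ne'
    rw [Function.iterate_succ_apply']
    exact subset_closure ⟨_, rfl⟩
  have h1 : Metric.infDist x M ≤ dist x y := by
    exact Metric.infDist_le_dist_of_mem hyM
  have h2 : dist x y < Metric.infDist x M / 2 := by
    rw [dist_comm]; exact hyU
  linarith
end

section
/- An invertible bounded linear operator T on a Hilbert space H is recurrent if and only if its inverse T⁻¹ is recurrent. -/
open Filter Topology

theorem stmt2 {H : Type*} [NormedAddCommGroup H] [InnerProductSpace ℂ H]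
    [CompleteSpace H] (T : H ≃L[ℂ] H) :
    Recurrent (⇑T) ↔ Recurrent (⇑T.symm) := by
  have key : ∀ (f g : H → H), Function.LeftInverse g f → Recurrent f → Recurrent g := by
    intro f g hgf h U hU hUne
    obtain ⟨n, hn, x, ⟨y, hyU, hxy⟩, hxU⟩ := h U hU hUne
    refine ⟨n, hn, y, ⟨x, hxU, ?_⟩, hyU⟩
    rw [← hxy, (hgf.iterate n) y]
  constructor
  · exact key _ _ (fun x => T.symm_apply_apply x)
  · exact key _ _ (fun x => T.apply_symm_apply x)
end

section
/- Comparison principle for recurrence: Let X be a metric vector space, let Y ⊆ X be a dense linear subspace which is itself a linear metric space whose topology is stronger than the subspace topology from X, and let T : X → X be a continuous linear map with T(Y) ⊆ Y such that T restricted to Y is continuous in the topology of Y. If T restricted to Y is recurrent on Y, then T is recurrent on X. -/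
open Filter Topology

/-- Comparison principle for recurrence: if `Y` embeds continuously, densely and
injectively into `X` as a linear subspace, `T` is a continuous linear operator on `X`
mapping (the copy of) `Y` into itself, and the restriction `S` of `T` to `Y` is
continuous and recurrent on `Y`, then `T` is recurrent on `X`. -/
theorem stmt6 {X Y : Type*}
    [AddCommGroup X] [Module ℂ X] [MetricSpace X]
    [AddCommGroup Y] [Module ℂ Y] [MetricSpace Y]
    (ι : Y →ₗ[ℂ] X) (hιc : Continuous ι) (hιinj : Function.Injective ι)
    (hιdense : DenseRange ι)
    (T : X →ₗ[ℂ] X) (hT : Continuous T)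
    (S : Y →ₗ[ℂ] Y) (hS : Continuous S)
    (hcomm : ∀ y : Y, ι (S y) = T (ι y))
    (hrec : Recurrent (⇑S)) :
    Recurrent (⇑T) := by
  intro U hU hUne
  have hiter : ∀ n (y : Y), ι (S^[n] y) = T^[n] (ι y) := by
    intro n
    induction n with
    | zero => intro y; simp
    | succ n ih =>
      intro y
      rw [Function.iterate_succ_apply, Function.iterate_succ_apply, ih, hcomm]
  have hVopen : IsOpen (ι ⁻¹' U) := hU.preimage hιc
  have hVne : (ι ⁻¹' U).Nonempty := by
    obtain ⟨x, hx⟩ := hUne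
    obtain ⟨y, hy⟩ := hιdense.mem_nhds (hU.mem_nhds hx)
    exact ⟨y, hy⟩
  obtain ⟨n, hn, z, ⟨y, hyU, hyz⟩, hzU⟩ := hrec _ hVopen hVne
  refine ⟨n, hn, ι z, ⟨ι y, hyU, ?_⟩, hzU⟩
  rw [← hiter, hyz]
end

section
/- For every real ν and every λ on the unit circle, the composition operator C_{φ_λ} induced by the rotation φ_λ(z) = λz is recurrent on the weighted Dirichlet space S_ν; in fact every f ∈ S_ν is a recurrent vector for C_{φ_λ}. -/
open Filter Topology

/-- The squared `S_ν` norm of a coefficient sequence. -/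
noncomputable def snormSq (ν : ℝ) (a : ℕ → ℂ) : ℝ :=
  ∑' n : ℕ, ‖a n‖ ^ 2 * ((n : ℝ) + 1) ^ (2 * ν)

/-- Membership in the weighted Dirichlet space `S_ν`, in terms of Taylor coefficients. -/
def memS (ν : ℝ) (a : ℕ → ℂ) : Prop :=
  Summable fun n : ℕ => ‖a n‖ ^ 2 * ((n : ℝ) + 1) ^ (2 * ν)

/-!
The powers of a rotation `λ` return arbitrarily close to `1` (as in any compact group, `1` is a
cluster point of `n ↦ λⁿ`), so `λ^{n_k} → 1` along some `n_k → ∞`. Then each Taylor coefficient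
of `C_{φ_λ}^{n_k} f - f = Σ (λ^{m n_k} - 1) aₘ zᵐ` tends to `0` while being dominated by `2 |aₘ|`,
and dominated convergence gives `‖C_{φ_λ}^{n_k} f - f‖_ν → 0`.
-/

theorem exists_strictMono_pos_tendsto_pow_one {G : Type*} [Group G] [TopologicalSpace G]
    [CompactSpace G] [IsTopologicalGroup G] [FirstCountableTopology G] (x : G) :
    ∃ n : ℕ → ℕ, StrictMono n ∧ (∀ k, 0 < n k) ∧ Tendsto (fun k => x ^ n k) atTop (𝓝 1) := by
  obtain ⟨ψ, hψ, hlim⟩ := (mapClusterPt_one_atTop_pow x).tendsto_subseq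
  exact ⟨fun k => ψ (k + 1), hψ.comp fun _ _ => Nat.succ_lt_succ,
    fun k => (Nat.zero_le _).trans_lt (hψ k.succ_pos),
    hlim.comp (tendsto_add_atTop_nat 1)⟩

theorem exists_strictMono_pos_tendsto_pow_one_of_norm_eq_one {lam : ℂ} (hlam : ‖lam‖ = 1) :
    ∃ n : ℕ → ℕ, StrictMono n ∧ (∀ k, 0 < n k) ∧
      Tendsto (fun k => lam ^ n k) atTop (𝓝 1) := by
  let z : Circle := ⟨lam, mem_sphere_zero_iff_norm.2 hlam⟩
  obtain ⟨n, hmono, hpos, hlim⟩ := exists_strictMono_pos_tendsto_pow_one z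
  exact ⟨n, hmono, hpos, (continuous_subtype_val.tendsto 1).comp hlim⟩

theorem norm_sq_mul_sub_self_le {c z : ℂ} (hc : ‖c‖ ≤ 1) : ‖c * z - z‖ ^ 2 ≤ 4 * ‖z‖ ^ 2 := by
  have h : ‖c * z - z‖ ≤ 2 * ‖z‖ :=
    calc ‖c * z - z‖ ≤ ‖c‖ * ‖z‖ + ‖z‖ := by grw [norm_sub_le, norm_mul]
      _ ≤ 2 * ‖z‖ := by nlinarith [norm_nonneg z]
  nlinarith [norm_nonneg (c * z - z)]

theorem tendsto_snormSq_mul_sub_self {ι : Type*} {l : Filter ι} {ν : ℝ} {a : ℕ → ℂ}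
    (ha : memS ν a) {c : ι → ℕ → ℂ} (hc : ∀ i m, ‖c i m‖ ≤ 1)
    (hlim : ∀ m, Tendsto (fun i => c i m) l (𝓝 1)) :
    Tendsto (fun i => snormSq ν fun m => c i m * a m - a m) l (𝓝 0) := by
  have hterm : ∀ m, Tendsto (fun i => ‖c i m * a m - a m‖ ^ 2 * ((m : ℝ) + 1) ^ (2 * ν)) l
      (𝓝 0) := by
    intro m
    have hcont : Continuous fun w : ℂ => ‖w * a m - a m‖ ^ 2 * ((m : ℝ) + 1) ^ (2 * ν) := by
      fun_prop
    simpa [Function.comp_def] using (hcont.tendsto 1).comp (hlim m)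
  have hdom : ∀ i m, ‖‖c i m * a m - a m‖ ^ 2 * ((m : ℝ) + 1) ^ (2 * ν)‖
      ≤ 4 * (‖a m‖ ^ 2 * ((m : ℝ) + 1) ^ (2 * ν)) := by
    intro i m
    have hw : (0 : ℝ) ≤ ((m : ℝ) + 1) ^ (2 * ν) := by positivity
    rw [Real.norm_of_nonneg (by positivity), ← mul_assoc]
    exact mul_le_mul_of_nonneg_right (norm_sq_mul_sub_self_le (hc i m)) hw
  simpa [snormSq] using
    tendsto_tsum_of_dominated_convergence (ha.mul_left 4) hterm (.of_forall hdom)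

/-- Every `f ∈ S_ν` is a recurrent vector for the rotation composition operator
`C_{φ_λ} : Σ aₘ zᵐ ↦ Σ aₘ λᵐ zᵐ`, `|λ| = 1`; so `C_{φ_λ}` is recurrent on `S_ν`. -/
theorem stmt7 (ν : ℝ) (lam : ℂ) (hlam : ‖lam‖ = 1) (a : ℕ → ℂ) (ha : memS ν a) :
    ∃ n : ℕ → ℕ, StrictMono n ∧ (∀ k, 0 < n k) ∧
      Tendsto (fun k => snormSq ν (fun m => lam ^ (m * n k) * a m - a m))
        atTop (𝓝 0) := by
  obtain ⟨n, hmono, hpos, hlim⟩ := exists_strictMono_pos_tendsto_pow_one_of_norm_eq_one hlam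
  refine ⟨n, hmono, hpos, tendsto_snormSq_mul_sub_self ha (fun k m => ?_) fun m => ?_⟩
  · simp [norm_pow, hlam]
  · simpa [mul_comm m, pow_mul] using hlim.pow m
end

section
/- Let φ be an analytic self-map of the unit disk 𝔻 such that the iterates φ_n converge pointwise on 𝔻 to a constant p ∈ 𝔻. Then every recurrent vector f ∈ S_ν of the composition operator C_φ on S_ν satisfies f(z) = f(p) for all z ∈ 𝔻, i.e., f is constant. Consequently C_φ is not recurrent on S_ν. -/
open Filter Topology

/-- Evaluation of the analytic function with Taylor coefficients `a` at `z`. -/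
noncomputable def seval (a : ℕ → ℂ) (z : ℂ) : ℂ := ∑' n : ℕ, a n * z ^ n

/-!
The weight gives `‖a n‖ ≤ ‖a‖ (n + 1) ^ (-ν)`, so the Taylor series of `a ∈ S_ν` has radius at
least `1` and evaluation at a point of `𝔻` is bounded on `S_ν`. If `C_φ^{n_k} f → f`, then
`f z = lim f (φ_{n_k} z) = f p` by continuity of `f` at `p`, so recurrent vectors are constant.
A constant has vanishing first Taylor coefficient, hence lies at distance at least `2 ^ ν`
from the identity function, and recurrent vectors cannot be dense.
-/

open FormalMultilinearSeries Metric Set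

lemma summable_natCast_add_one_pow_mul_geometric (k : ℕ) {r : ℝ} (hr : ‖r‖ < 1) :
    Summable fun n : ℕ => ((n : ℝ) + 1) ^ k * r ^ n := by
  refine (summable_sum fun i (_ : i ∈ Finset.range (k + 1)) =>
      (summable_pow_mul_geometric_of_norm_lt_one i hr).mul_right (k.choose i : ℝ)).congr
    fun n => ?_
  simp only [add_pow, one_pow, mul_one, Finset.sum_mul]
  exact Finset.sum_congr rfl fun i _ => by ring

lemma summable_natCast_add_one_rpow_mul_geometric (c : ℝ) {r : ℝ} (hr₀ : 0 ≤ r)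
    (hr₁ : r < 1) :
    Summable fun n : ℕ => ((n : ℝ) + 1) ^ c * r ^ n := by
  refine (summable_natCast_add_one_pow_mul_geometric ⌈c⌉₊
    (by rwa [Real.norm_of_nonneg hr₀])).of_nonneg_of_le (fun n => by positivity) fun n => ?_
  refine mul_le_mul_of_nonneg_right ?_ (by positivity)
  rw [← Real.rpow_natCast]
  exact Real.rpow_le_rpow_of_exponent_le (by linarith [n.cast_nonneg (α := ℝ)]) (Nat.le_ceil c)

section WeightedDirichletSpace

variable {ν : ℝ} {a b : ℕ → ℂ}

lemma memS_single (i : ℕ) (c : ℂ) : memS ν (Pi.single i c) :=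
  (hasSum_single i fun m hm => by simp [hm]).summable

lemma memS_sub (ha : memS ν a) (hb : memS ν b) : memS ν (fun m => a m - b m) := by
  refine ((ha.mul_left 2).add (hb.mul_left 2)).of_nonneg_of_le (fun n => by positivity)
    fun n => ?_
  have h : ‖a n - b n‖ ^ 2 ≤ 2 * ‖a n‖ ^ 2 + 2 * ‖b n‖ ^ 2 := by
    nlinarith [norm_sub_le (a n) (b n), norm_nonneg (a n - b n), sq_nonneg (‖a n‖ - ‖b n‖)]
  have hw : (0 : ℝ) ≤ ((n : ℝ) + 1) ^ (2 * ν) := by positivity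
  calc ‖a n - b n‖ ^ 2 * ((n : ℝ) + 1) ^ (2 * ν)
      ≤ (2 * ‖a n‖ ^ 2 + 2 * ‖b n‖ ^ 2) * ((n : ℝ) + 1) ^ (2 * ν) :=
        mul_le_mul_of_nonneg_right h hw
    _ = _ := by ring

lemma norm_sq_mul_le_snormSq (ha : memS ν a) (n : ℕ) :
    ‖a n‖ ^ 2 * ((n : ℝ) + 1) ^ (2 * ν) ≤ snormSq ν a :=
  ha.le_tsum n fun m _ => by positivity

lemma norm_le_sqrt_snormSq_mul (ha : memS ν a) (n : ℕ) :
    ‖a n‖ ≤ √(snormSq ν a) * ((n : ℝ) + 1) ^ (-ν) := by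
  have hn : (0 : ℝ) < (n : ℝ) + 1 := by positivity
  have h : ‖a n‖ * ((n : ℝ) + 1) ^ ν ≤ √(snormSq ν a) := by
    refine Real.le_sqrt_of_sq_le ?_
    rw [mul_pow, ← Real.rpow_mul_natCast hn.le, mul_comm ν]
    exact_mod_cast norm_sq_mul_le_snormSq ha n
  rw [Real.rpow_neg hn.le, ← div_eq_mul_inv, le_div_iff₀ (by positivity)]
  exact h

lemma summable_norm_mul_pow_of_memS (ha : memS ν a) {r : ℝ} (hr₀ : 0 ≤ r) (hr₁ : r < 1) :
    Summable fun n => ‖a n‖ * r ^ n :=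
  ((summable_natCast_add_one_rpow_mul_geometric (-ν) hr₀ hr₁).mul_left
    √(snormSq ν a)).of_nonneg_of_le (fun n => by positivity) fun n => by
      rw [← mul_assoc]
      exact mul_le_mul_of_nonneg_right (norm_le_sqrt_snormSq_mul ha n) (by positivity)

lemma summable_mul_pow_of_memS (ha : memS ν a) {z : ℂ} (hz : ‖z‖ < 1) :
    Summable fun n => a n * z ^ n :=
  .of_norm <| by
    simpa only [norm_mul, norm_pow] using summable_norm_mul_pow_of_memS ha (norm_nonneg z) hz

lemma one_le_radius_ofScalars (ha : memS ν a) : 1 ≤ (ofScalars ℂ a).radius := by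
  refine ENNReal.le_of_forall_nnreal_lt fun r hr => (ofScalars ℂ a).le_radius_of_summable ?_
  simp only [ofScalars_norm]
  exact summable_norm_mul_pow_of_memS ha r.2 (by exact_mod_cast hr)

lemma hasFPowerSeriesOnBall_seval (ha : memS ν a) :
    HasFPowerSeriesOnBall (seval a) (ofScalars ℂ a) 0 1 := by
  have h := (ofScalars ℂ a).hasFPowerSeriesOnBall
    (zero_lt_one.trans_le (one_le_radius_ofScalars ha))
  have hsum : (ofScalars ℂ a).sum = seval a := funext (ofScalars_sum_eq a)
  rw [hsum] at h
  exact h.mono zero_lt_one (one_le_radius_ofScalars ha)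

lemma continuousOn_seval (ha : memS ν a) : ContinuousOn (seval a) (ball 0 1) := by
  have h := (hasFPowerSeriesOnBall_seval ha).continuousOn
  rwa [← ENNReal.coe_one, eball_coe, NNReal.coe_one] at h

lemma seval_sub (ha : memS ν a) (hb : memS ν b) {z : ℂ} (hz : ‖z‖ < 1) :
    seval (fun m => a m - b m) z = seval a z - seval b z := by
  simp only [seval, sub_mul]
  exact (summable_mul_pow_of_memS ha hz).tsum_sub (summable_mul_pow_of_memS hb hz)

lemma norm_seval_le (ha : memS ν a) {z : ℂ} (hz : ‖z‖ < 1) :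
    ‖seval a z‖ ≤ √(snormSq ν a) * ∑' n : ℕ, ((n : ℝ) + 1) ^ (-ν) * ‖z‖ ^ n := by
  have hnorm : Summable fun n => ‖a n * z ^ n‖ := by
    simpa only [norm_mul, norm_pow] using summable_norm_mul_pow_of_memS ha (norm_nonneg z) hz
  rw [← tsum_mul_left]
  refine (norm_tsum_le_tsum_norm hnorm).trans <| hnorm.tsum_le_tsum (fun n => ?_)
    ((summable_natCast_add_one_rpow_mul_geometric (-ν) (norm_nonneg z) hz).mul_left _)
  rw [norm_mul, norm_pow, ← mul_assoc]
  exact mul_le_mul_of_nonneg_right (norm_le_sqrt_snormSq_mul ha n) (by positivity)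

lemma tendsto_seval_of_tendsto_snormSq {ι : Type*} {l : Filter ι} {b : ι → ℕ → ℂ}
    (hb : ∀ i, memS ν (b i)) (ha : memS ν a)
    (h : Tendsto (fun i => snormSq ν (fun m => b i m - a m)) l (𝓝 0)) {z : ℂ} (hz : ‖z‖ < 1) :
    Tendsto (fun i => seval (b i) z) l (𝓝 (seval a z)) := by
  rw [tendsto_iff_norm_sub_tendsto_zero]
  refine squeeze_zero (fun i => norm_nonneg _) (fun i => ?_)
    (by simpa using h.sqrt.mul_const (∑' n : ℕ, ((n : ℝ) + 1) ^ (-ν) * ‖z‖ ^ n))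
  rw [← seval_sub (hb i) ha hz]
  exact norm_seval_le (memS_sub (hb i) ha) hz

lemma coeff_one_eq_zero_of_eqOn_const (ha : memS ν a) {c : ℂ}
    (h : EqOn (seval a) (fun _ => c) (ball 0 1)) : a 1 = 0 := by
  have hderiv := (hasFPowerSeriesOnBall_seval ha).hasFPowerSeriesAt.deriv
  rw [(h.eventuallyEq_of_mem (ball_mem_nhds 0 one_pos)).deriv_eq, deriv_const] at hderiv
  simpa [ofScalars_apply_eq] using hderiv.symm

lemma two_rpow_le_snormSq_single_sub (ha : memS ν a) (ha₁ : a 1 = 0) :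
    (2 : ℝ) ^ (2 * ν) ≤ snormSq ν (fun m => (Pi.single 1 1 : ℕ → ℂ) m - a m) := by
  have h := norm_sq_mul_le_snormSq (memS_sub (memS_single 1 1) ha) 1
  norm_num [ha₁] at h
  exact h

end WeightedDirichletSpace

def IsRecurrentVector (ν : ℝ) (C : (ℕ → ℂ) → (ℕ → ℂ)) (f : ℕ → ℂ) : Prop :=
  ∃ n : ℕ → ℕ, StrictMono n ∧
    Tendsto (fun k => snormSq ν (fun m => C^[n k] f m - f m)) atTop (𝓝 0)

section CompositionOperator

variable {ν : ℝ} {φ : ℂ → ℂ} {C : (ℕ → ℂ) → (ℕ → ℂ)} {f : ℕ → ℂ}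

lemma memS_iterate (hC : ∀ a, memS ν a → memS ν (C a)) (hf : memS ν f) (m : ℕ) :
    memS ν (C^[m] f) := by
  induction m with
  | zero => exact hf
  | succ m ih => exact Function.iterate_succ_apply' C m f ▸ hC _ ih

lemma seval_iterate (hφ : MapsTo φ (ball 0 1) (ball 0 1))
    (hC : ∀ a, memS ν a → memS ν (C a))
    (hcomp : ∀ a, memS ν a → ∀ z ∈ ball (0 : ℂ) 1, seval (C a) z = seval a (φ z))
    (hf : memS ν f) (m : ℕ) {z : ℂ} (hz : z ∈ ball 0 1) :
    seval (C^[m] f) z = seval f (φ^[m] z) := by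
  induction m generalizing z with
  | zero => rfl
  | succ m ih =>
    rw [Function.iterate_succ_apply' C, hcomp _ (memS_iterate hC hf m) z hz, ih (hφ hz),
      Function.iterate_succ_apply]

theorem seval_eq_of_isRecurrentVector (hφ : MapsTo φ (ball 0 1) (ball 0 1)) {p : ℂ}
    (hp : p ∈ ball (0 : ℂ) 1)
    (hC : ∀ a, memS ν a → memS ν (C a))
    (hcomp : ∀ a, memS ν a → ∀ z ∈ ball (0 : ℂ) 1, seval (C a) z = seval a (φ z))
    (hf : memS ν f) (hrec : IsRecurrentVector ν C f) {z : ℂ} (hz : z ∈ ball 0 1)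
    (hconv : Tendsto (fun n => φ^[n] z) atTop (𝓝 p)) :
    seval f z = seval f p := by
  obtain ⟨n, hn, hlim⟩ := hrec
  refine tendsto_nhds_unique (tendsto_seval_of_tendsto_snormSq
    (fun k => memS_iterate hC hf (n k)) hf hlim (mem_ball_zero_iff.mp hz)) ?_
  have hcont : ContinuousAt (seval f) p :=
    (continuousOn_seval hf).continuousAt (isOpen_ball.mem_nhds hp)
  refine (hcont.tendsto.comp (hconv.comp hn.tendsto_atTop)).congr fun k => ?_
  exact (seval_iterate hφ hC hcomp hf (n k) hz).symm

end CompositionOperator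

theorem stmt10_general (ν : ℝ) (φ : ℂ → ℂ)
    (hφmaps : ∀ z ∈ Metric.ball (0 : ℂ) 1, φ z ∈ Metric.ball (0 : ℂ) 1)
    (p : ℂ) (hp : p ∈ Metric.ball (0 : ℂ) 1)
    (hconv : ∀ z ∈ Metric.ball (0 : ℂ) 1, Tendsto (fun n => φ^[n] z) atTop (𝓝 p))
    (Cop : (ℕ → ℂ) → (ℕ → ℂ))
    (hCmem : ∀ a, memS ν a → memS ν (Cop a))
    (hcomp : ∀ a, memS ν a → ∀ z ∈ Metric.ball (0 : ℂ) 1,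
      seval (Cop a) z = seval a (φ z)) :
    (∀ f, memS ν f →
      (∃ n : ℕ → ℕ, StrictMono n ∧ (∀ k, 0 < n k) ∧
        Tendsto (fun k => snormSq ν (fun m => Cop^[n k] f m - f m)) atTop (𝓝 0)) →
      ∀ z ∈ Metric.ball (0 : ℂ) 1, seval f z = seval f p)
    ∧ ¬ (∀ g, memS ν g → ∀ ε > 0, ∃ f, memS ν f ∧
        (∃ n : ℕ → ℕ, StrictMono n ∧ (∀ k, 0 < n k) ∧
          Tendsto (fun k => snormSq ν (fun m => Cop^[n k] f m - f m)) atTop (𝓝 0)) ∧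
        snormSq ν (fun m => g m - f m) < ε) := by
  refine (and_iff_left_of_imp fun hconst hdense => ?_).mpr ?_
  · obtain ⟨f, hf, hrec, hclose⟩ :=
      hdense (Pi.single 1 1) (memS_single 1 1) ((2 : ℝ) ^ (2 * ν)) (by positivity)
    have hf₁ : f 1 = 0 := coeff_one_eq_zero_of_eqOn_const hf (hconst f hf hrec)
    exact (two_rpow_le_snormSq_single_sub hf hf₁).not_gt hclose
  · rintro f hf ⟨n, hn, -, hlim⟩ z hz
    exact seval_eq_of_isRecurrentVector hφmaps hp hCmem hcomp hf ⟨n, hn, hlim⟩ hz (hconv z hz)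

/-- If the iterates of the analytic self-map `φ` of the disk converge pointwise to a
constant `p ∈ 𝔻`, then every recurrent vector of `C_φ` on `S_ν` is constant, and
consequently `C_φ` is not recurrent on `S_ν` (its recurrent vectors are not dense). -/
theorem stmt10 (ν : ℝ) (φ : ℂ → ℂ)
    (hφmaps : ∀ z ∈ Metric.ball (0 : ℂ) 1, φ z ∈ Metric.ball (0 : ℂ) 1)
    (hφa : AnalyticOnNhd ℂ φ (Metric.ball (0 : ℂ) 1))
    (p : ℂ) (hp : p ∈ Metric.ball (0 : ℂ) 1)
    (hconv : ∀ z ∈ Metric.ball (0 : ℂ) 1, Tendsto (fun n => φ^[n] z) atTop (𝓝 p))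
    (Cop : (ℕ → ℂ) → (ℕ → ℂ))
    (hCmem : ∀ a, memS ν a → memS ν (Cop a))
    (hcomp : ∀ a, memS ν a → ∀ z ∈ Metric.ball (0 : ℂ) 1,
      seval (Cop a) z = seval a (φ z)) :
    (∀ f, memS ν f →
      (∃ n : ℕ → ℕ, StrictMono n ∧ (∀ k, 0 < n k) ∧
        Tendsto (fun k => snormSq ν (fun m => Cop^[n k] f m - f m)) atTop (𝓝 0)) →
      ∀ z ∈ Metric.ball (0 : ℂ) 1, seval f z = seval f p)
    ∧ ¬ (∀ g, memS ν g → ∀ ε > 0, ∃ f, memS ν f ∧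
        (∃ n : ℕ → ℕ, StrictMono n ∧ (∀ k, 0 < n k) ∧
          Tendsto (fun k => snormSq ν (fun m => Cop^[n k] f m - f m)) atTop (𝓝 0)) ∧
        snormSq ν (fun m => g m - f m) < ε) :=
  stmt10_general ν φ hφmaps p hp hconv Cop hCmem hcomp
end

section
/- Let T be a recurrent bounded linear operator on a complex Hilbert space H. Then every eigenvalue of the adjoint operator T* has modulus 1, i.e., the point spectrum of T* is contained in the unit circle. -/
open Filter Topology

/-!
If `T† g = μ g` with `g ≠ 0`, then `φ = ⟪g, ·⟫` is a continuous surjection `H → ℂ` with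
`φ ∘ T = (conj μ * ·) ∘ φ`, so recurrence of `T` passes to multiplication by `conj μ` on `ℂ`.
Multiplication by `c` with `‖c‖ ≠ 1` is not recurrent: every positive power of it moves the
annulus between radii `‖c‖` and `1` off itself.
-/

theorem Recurrent.of_semiconj {X Y : Type*} [TopologicalSpace X] [TopologicalSpace Y]
    {T : X → X} {S : Y → Y} {π : X → Y} (hT : Recurrent T) (hπ : Continuous π)
    (hdense : DenseRange π) (h : Function.Semiconj π T S) : Recurrent S := by
  intro U hU hne
  obtain ⟨x₀, hx₀⟩ := hdense.exists_mem_open hU hne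
  obtain ⟨n, hn, _, ⟨x, hx, rfl⟩, hTx⟩ := hT (π ⁻¹' U) (hU.preimage hπ) ⟨x₀, hx₀⟩
  refine ⟨n, hn, S^[n] (π x), ⟨π x, hx, rfl⟩, ?_⟩
  rwa [← (h.iterate_right n) x]

theorem exists_Ioo_forall_pow_mul_notMem {t : ℝ} (ht0 : 0 ≤ t) (ht1 : t ≠ 1) :
    ∃ a b : ℝ, 0 ≤ a ∧ a < b ∧ ∀ n, 0 < n → ∀ r ∈ Set.Ioo a b, t ^ n * r ∉ Set.Ioo a b := by
  rcases lt_or_gt_of_ne ht1 with hlt | hgt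
  · refine ⟨t, 1, ht0, hlt, fun n hn r ⟨htr, _⟩ ⟨htnr, _⟩ => ?_⟩
    have : t ^ n ≤ t := pow_le_of_le_one ht0 hlt.le hn.ne'
    nlinarith
  · refine ⟨1, t, zero_le_one, hgt, fun n hn r ⟨h1r, _⟩ ⟨_, htnr⟩ => ?_⟩
    have : t ≤ t ^ n := le_self_pow₀ hgt.le hn.ne'
    nlinarith

theorem norm_eq_one_of_recurrent_mul {𝕜 : Type*} [RCLike 𝕜] {c : 𝕜}
    (h : Recurrent (c * ·)) : ‖c‖ = 1 := by
  by_contra hc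
  obtain ⟨a, b, ha, hab, hscale⟩ := exists_Ioo_forall_pow_mul_notMem (norm_nonneg c) hc
  have hne : (norm ⁻¹' Set.Ioo a b : Set 𝕜).Nonempty := by
    refine ⟨(((a + b) / 2 : ℝ) : 𝕜), ?_⟩
    simp only [Set.mem_preimage, Set.mem_Ioo, RCLike.norm_ofReal,
      abs_of_nonneg (by linarith : 0 ≤ (a + b) / 2)]
    constructor <;> linarith
  obtain ⟨n, hn, _, ⟨z, hz, rfl⟩, hcz⟩ := h _ (isOpen_Ioo.preimage continuous_norm) hne
  rw [Set.mem_preimage, mul_left_iterate_apply, norm_mul, norm_pow] at hcz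
  exact hscale n hn ‖z‖ hz hcz

theorem inner_apply_eq_conj_mul_inner_of_adjoint_apply_eq_smul {𝕜 H : Type*} [RCLike 𝕜]
    [NormedAddCommGroup H] [InnerProductSpace 𝕜 H] [CompleteSpace H] {T : H →L[𝕜] H}
    {μ : 𝕜} {g : H} (heig : T.adjoint g = μ • g) (x : H) :
    inner 𝕜 g (T x) = starRingEnd 𝕜 μ * inner 𝕜 g x := by
  rw [← ContinuousLinearMap.adjoint_inner_left, heig, inner_smul_left]

theorem inner_left_surjective {𝕜 H : Type*} [RCLike 𝕜] [NormedAddCommGroup H]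
    [InnerProductSpace 𝕜 H] {g : H} (hg : g ≠ 0) : Function.Surjective (inner 𝕜 g) := by
  intro z
  refine ⟨(z / inner 𝕜 g g) • g, ?_⟩
  rw [inner_smul_right, div_mul_cancel₀ _ (inner_self_ne_zero.2 hg)]

/-- Every eigenvalue of the adjoint of a recurrent operator has modulus 1. -/
theorem stmt13 {H : Type*} [NormedAddCommGroup H] [InnerProductSpace ℂ H]
    [CompleteSpace H] (T : H →L[ℂ] H) (hrec : Recurrent (⇑T))
    (μ : ℂ) (g : H) (hg : g ≠ 0) (heig : ContinuousLinearMap.adjoint T g = μ • g) :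
    ‖μ‖ = 1 := by
  have hsemi : Function.Semiconj (inner ℂ g) T (starRingEnd ℂ μ * ·) :=
    inner_apply_eq_conj_mul_inner_of_adjoint_apply_eq_smul heig
  have hmul := hrec.of_semiconj (continuous_const.inner continuous_id)
    (inner_left_surjective hg).denseRange hsemi
  simpa using norm_eq_one_of_recurrent_mul hmul
end
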